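/- Let φ be any IFG_N-formula over σ and 𝔄 a σ-structure with universe A. If the meaning ‖φ‖_𝔄 is a perfect double suit (i.e., ‖φ‖_𝔄 = (𝒫(V), 𝒫(^N A \ V)) for some team V), then ‖φ‖_𝔄 = ‖φ_∅‖_𝔄, where φ_∅ is the perfection of φ. -/

import Mathlib

open FirstOrder

/-- A team: a set of valuations `Fin N → A`. -/
abbrev Team (A : Type*) (N : ℕ) := Set (Fin N → A)

/-- A pair of collections of teams. -/
abbrev TPair (A : Type*) (N : ℕ) := Set (Team A N) × Set (Team A N)

/-- A suit: a nonempty collection of teams closed under subsets. -/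
def IsSuit {A : Type*} {N : ℕ} (S : Set (Team A N)) : Prop :=
  S.Nonempty ∧ ∀ ⦃V V' : Team A N⦄, V ∈ S → V' ⊆ V → V' ∈ S

/-- A double suit: a pair of suits whose intersection is `{∅}`. -/
def IsDoubleSuit {A : Type*} {N : ℕ} (X : TPair A N) : Prop :=
  IsSuit X.1 ∧ IsSuit X.2 ∧ X.1 ∩ X.2 = {∅}

/-- The pair `(𝒫(V), 𝒫(^N A \ V))`. -/
def perfPair {A : Type*} {N : ℕ} (V : Team A N) : TPair A N :=
  (Set.powerset V, Set.powerset Vᶜ)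

/-- `a ≈_J b` : the valuations `a` and `b` agree outside of `J`. -/
def AgreeOutside {A : Type*} {N : ℕ} (J : Set (Fin N)) (a b : Fin N → A) : Prop :=
  ∀ i ∉ J, a i = b i

/-- `V = V₁ ∪_J V₂` : `V₁, V₂` form a `J`-saturated disjoint cover of `V`. -/
def CovJ {A : Type*} {N : ℕ} (J : Set (Fin N)) (V V₁ V₂ : Team A N) : Prop :=
  Disjoint V₁ V₂ ∧ V₁ ∪ V₂ = V ∧
  (∀ a ∈ V₁, ∀ b ∈ V, AgreeOutside J a b → b ∈ V₁) ∧
  (∀ a ∈ V₂, ∀ b ∈ V, AgreeOutside J a b → b ∈ V₂)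

/-- `f` is independent of `J` on `V`. -/
def IndepOn {A : Type*} {N : ℕ} (J : Set (Fin N)) (V : Team A N)
    (f : (Fin N → A) → A) : Prop :=
  ∀ a ∈ V, ∀ b ∈ V, AgreeOutside J a b → f a = f b

/-- The `n`-variation of `V` by `f`: `V(n:f) = {a(n:f(a)) : a ∈ V}`. -/
def varF {A : Type*} {N : ℕ} (V : Team A N) (n : Fin N) (f : (Fin N → A) → A) : Team A N :=
  (fun a => Function.update a n (f a)) '' V

/-- `V(n:A) = {a(n:b) : a ∈ V, b ∈ A}`. -/
def varAll {A : Type*} {N : ℕ} (V : Team A N) (n : Fin N) : Team A N :=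
  {c | ∃ a ∈ V, ∃ b : A, c = Function.update a n b}

/-- IFG_N-formulas over the signature `L`: atomic first-order formulas
(equalities and relations between terms in the variables `v_0, …, v_{N-1}`),
closed under `∼ψ`, `ψ₁ ∨_J ψ₂`, and `∃v_n/J ψ`. -/
inductive IFG (L : Language) (N : ℕ) : Type _
  | equal (t₁ t₂ : L.Term (Fin N)) : IFG L N
  | rel {k : ℕ} (R : L.Relations k) (ts : Fin k → L.Term (Fin N)) : IFG L N
  | not (φ : IFG L N) : IFG L N
  | or (J : Set (Fin N)) (φ₁ φ₂ : IFG L N) : IFG L N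
  | ex (n : Fin N) (J : Set (Fin N)) (φ : IFG L N) : IFG L N

/-- Hodges' trump semantics: `Sat A φ true V` means `𝔄 ⊨⁺ φ[V]` (`V` is a trump),
and `Sat A φ false W` means `𝔄 ⊨⁻ φ[W]` (`W` is a cotrump). -/
def Sat {L : Language} {N : ℕ} (A : Type*) [L.Structure A] :
    IFG L N → Bool → Team A N → Prop
  | .equal t₁ t₂, true, V => ∀ a ∈ V, t₁.realize a = t₂.realize a
  | .equal t₁ t₂, false, W => ∀ a ∈ W, t₁.realize a ≠ t₂.realize a
  | .rel R ts, true, V => ∀ a ∈ V, Language.Structure.RelMap R (fun i => (ts i).realize a)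
  | .rel R ts, false, W => ∀ a ∈ W, ¬ Language.Structure.RelMap R (fun i => (ts i).realize a)
  | .not φ, b, V => Sat A φ (!b) V
  | .or J φ₁ φ₂, true, V =>
      ∃ V₁ V₂, CovJ J V V₁ V₂ ∧ Sat A φ₁ true V₁ ∧ Sat A φ₂ true V₂
  | .or _ φ₁ φ₂, false, W => Sat A φ₁ false W ∧ Sat A φ₂ false W
  | .ex n J φ, true, V =>
      ∃ f : (Fin N → A) → A, IndepOn J V f ∧ Sat A φ true (varF V n f)
  | .ex n _ φ, false, W => Sat A φ false (varAll W n)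

/-- The meaning `‖φ‖_𝔄 = ({V : 𝔄 ⊨⁺ φ[V]}, {W : 𝔄 ⊨⁻ φ[W]})`. -/
def meaning {L : Language} {N : ℕ} (A : Type*) [L.Structure A] (φ : IFG L N) :
    TPair A N :=
  ({V | Sat A φ true V}, {W | Sat A φ false W})

/-- An IFG-formula is perfect if all of its slash sets are empty. -/
def IFG.Perfect {L : Language} {N : ℕ} : IFG L N → Prop
  | .equal _ _ => True
  | .rel _ _ => True
  | .not φ => φ.Perfect
  | .or J φ₁ φ₂ => J = ∅ ∧ φ₁.Perfect ∧ φ₂.Perfect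
  | .ex _ J φ => J = ∅ ∧ φ.Perfect

/-- The perfection `φ_∅` of `φ`: replace every slash set by `∅`. -/
def IFG.perfection {L : Language} {N : ℕ} : IFG L N → IFG L N
  | .equal t₁ t₂ => .equal t₁ t₂
  | .rel R ts => .rel R ts
  | .not φ => .not φ.perfection
  | .or _ φ₁ φ₂ => .or ∅ φ₁.perfection φ₂.perfection
  | .ex n _ φ => .ex n ∅ φ.perfection

/-!
Weakening a slash set only weakens the constraints on covers and Skolem functions, so every
trump (cotrump) of `φ` is one of `φ_∅`. Conversely, no valuation lies in both a trump and a
cotrump of any formula; as the cotrump `^N A \ V` of `φ` is one of `φ_∅`, every trump of `φ_∅`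
lies in `V`, and symmetrically for cotrumps.
-/

section

variable {L : Language} {N : ℕ} {A : Type*}

lemma AgreeOutside.mono {J J' : Set (Fin N)} (hJ : J ⊆ J') {a b : Fin N → A}
    (h : AgreeOutside J a b) : AgreeOutside J' a b :=
  fun i hi => h i fun hiJ => hi (hJ hiJ)

lemma CovJ.mono {J J' : Set (Fin N)} (hJ : J' ⊆ J) {V V₁ V₂ : Team A N}
    (h : CovJ J V V₁ V₂) : CovJ J' V V₁ V₂ := by
  obtain ⟨hdisj, hunion, hsat₁, hsat₂⟩ := h
  exact ⟨hdisj, hunion, fun a ha b hb hab => hsat₁ a ha b hb (hab.mono hJ),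
    fun a ha b hb hab => hsat₂ a ha b hb (hab.mono hJ)⟩

lemma IndepOn.mono {J J' : Set (Fin N)} (hJ : J' ⊆ J) {V : Team A N}
    {f : (Fin N → A) → A} (h : IndepOn J V f) : IndepOn J' V f :=
  fun a ha b hb hab => h a ha b hb (hab.mono hJ)

variable [L.Structure A]

lemma sat_perfection {φ : IFG L N} {b : Bool} {V : Team A N}
    (h : Sat A φ b V) : Sat A φ.perfection b V := by
  induction φ generalizing b V with
  | equal t₁ t₂ => exact h
  | rel R ts => exact h
  | not ψ ih => exact ih h
  | or J φ₁ φ₂ ih₁ ih₂ =>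
    cases b with
    | false => exact ⟨ih₁ h.1, ih₂ h.2⟩
    | true =>
      obtain ⟨V₁, V₂, hcov, h₁, h₂⟩ := h
      exact ⟨V₁, V₂, hcov.mono (Set.empty_subset J), ih₁ h₁, ih₂ h₂⟩
  | ex n J φ ih =>
    cases b with
    | false => exact ih h
    | true =>
      obtain ⟨f, hf, hφ⟩ := h
      exact ⟨f, hf.mono (Set.empty_subset J), ih hφ⟩

lemma meaning_le_meaning_perfection (φ : IFG L N) :
    meaning A φ ≤ meaning A φ.perfection :=
  ⟨fun _ => sat_perfection, fun _ => sat_perfection⟩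

lemma disjoint_of_sat_true_of_sat_false {φ : IFG L N} {V W : Team A N}
    (hV : Sat A φ true V) (hW : Sat A φ false W) : Disjoint V W := by
  induction φ generalizing V W with
  | equal t₁ t₂ => exact Set.disjoint_left.2 fun a haV haW => hW a haW (hV a haV)
  | rel R ts => exact Set.disjoint_left.2 fun a haV haW => hW a haW (hV a haV)
  | not ψ ih => exact (ih hW hV).symm
  | or J φ₁ φ₂ ih₁ ih₂ =>
    obtain ⟨V₁, V₂, ⟨-, rfl, -, -⟩, h₁, h₂⟩ := hV
    exact (ih₁ h₁ hW.1).union_left (ih₂ h₂ hW.2)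
  | ex n J φ ih =>
    obtain ⟨f, -, hφ⟩ := hV
    -- `a(n:f(a))` would lie both in the trump `V(n:f)` and in the cotrump `W(n:A)`.
    exact Set.disjoint_left.2 fun a haV haW =>
      Set.disjoint_left.1 (ih hφ hW) ⟨a, haV, rfl⟩ ⟨a, haW, f a, rfl⟩

lemma eq_perfPair_of_perfPair_le {V : Team A N} {X : TPair A N} (hle : perfPair V ≤ X)
    (hdisj : ∀ U ∈ X.1, ∀ W ∈ X.2, Disjoint U W) : X = perfPair V := by
  have hcompl : Vᶜ ∈ X.2 := hle.2 (Set.mem_powerset subset_rfl)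
  have hV : V ∈ X.1 := hle.1 (Set.mem_powerset subset_rfl)
  refine Prod.ext (le_antisymm (fun U hU => ?_) hle.1) (le_antisymm (fun W hW => ?_) hle.2)
  · exact (hdisj U hU _ hcompl).subset_compl_right.trans (compl_compl V).subset
  · exact (hdisj V hV W hW).symm.subset_compl_right

end

/-- If the meaning of `φ` is a perfect double suit, then `‖φ‖_𝔄 = ‖φ_∅‖_𝔄`. -/
theorem perfect_meaning_eq_perfection {L : Language} {N : ℕ} (A : Type*)
    [L.Structure A] (φ : IFG L N)
    (h : ∃ V : Team A N, meaning A φ = perfPair V) :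
    meaning A φ = meaning A φ.perfection := by
  obtain ⟨V, hV⟩ := h
  have hconsistent : ∀ U ∈ (meaning A φ.perfection).1, ∀ W ∈ (meaning A φ.perfection).2,
      Disjoint U W := fun _ hU _ hW => disjoint_of_sat_true_of_sat_false hU hW
  rw [hV, eq_perfPair_of_perfPair_le (hV ▸ meaning_le_meaning_perfection φ) hconsistent]
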